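/- arXiv:math/0701413 — 2 statements merged into one kernel-verified Lean document; each statement's English description precedes it below -/
import Mathlib

section
/- Let T > 0 and let ζ : [0,T] × ℝ → ℝ be a measurable function with 0 ≤ ζ ≤ 1. Suppose there exists a constant B > 0 such that for every continuously differentiable (in the space variable) continuous function H with compact support on [0,T] × ℝ, ∫₀ᵀ ∫_ℝ ∂_u H(s,u) ζ(s,u) du ds − 2 ∫₀ᵀ ∫_ℝ H(s,u)² du ds ≤ B. Then there exists a square integrable function g ∈ L²([0,T] × ℝ) such that ∫₀ᵀ ∫_ℝ H(s,u) g(s,u) du ds = − ∫₀ᵀ ∫_ℝ ∂_u H(s,u) ζ(s,u) du ds for every such H; that is, ζ admits a weak space derivative ∂_u ζ = g lying in L²([0,T] × ℝ). -/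
open MeasureTheory Real

/-- Test functions of class `C^{0,1}_0` on `[0,T] × ℝ`: continuous with compact support,
continuously differentiable in the second (space) variable. -/
def IsC01Test (H : ℝ → ℝ → ℝ) : Prop :=
  Continuous (Function.uncurry H) ∧ HasCompactSupport (Function.uncurry H) ∧
  (∀ s : ℝ, Differentiable ℝ (H s)) ∧
  Continuous (Function.uncurry fun s u => deriv (H s) u)

/-! The functional `ℓ(H) = ∫₀ᵀ∫_ℝ ∂_u H ζ` is linear in `H`. Applying the hypothesis to `x • H` for
all real `x` gives `x ℓ(H) - 2x²‖H‖² ≤ B`, and nonnegativity of this quadratic in `x` forces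
`ℓ(H)² ≤ 8B‖H‖²`, with `‖·‖` the `L²([0,T] × ℝ)`-norm. So the functional is bounded on the
image of the test functions in `L²`; Hahn–Banach extends it to all of `L²` and Riesz represents it
by some `ψ ∈ L²`, and `g = -ψ` is the weak derivative. -/

open Function

section Representation

variable {W E : Type*} [AddCommGroup W] [Module ℝ W]
  [NormedAddCommGroup E] [InnerProductSpace ℝ E]

/-- Hahn–Banach on the range of `ι`, then Riesz. -/
theorem exists_inner_eq_of_abs_le [CompleteSpace E] (ι : W →ₗ[ℝ] E) (ℓ : W →ₗ[ℝ] ℝ) (C : ℝ)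
    (hC : ∀ w, |ℓ w| ≤ C * ‖ι w‖) : ∃ φ : E, ∀ w, inner ℝ φ (ι w) = ℓ w := by
  have hker : LinearMap.ker ι ≤ LinearMap.ker ℓ := fun w hw => by
    simpa [LinearMap.mem_ker.mp hw] using hC w
  let f : LinearMap.range ι →ₗ[ℝ] ℝ :=
    (LinearMap.ker ι).liftQ ℓ hker ∘ₗ ι.quotKerEquivRange.symm.toLinearMap
  have hf : ∀ w, f ⟨ι w, LinearMap.mem_range_self ι w⟩ = ℓ w := fun w => by
    simp [f, LinearMap.quotKerEquivRange_symm_apply_image]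
  have hfC : ∀ x, ‖f x‖ ≤ C * ‖x‖ := by
    rintro ⟨_, w, rfl⟩
    rw [hf, norm_eq_abs]
    exact hC w
  obtain ⟨G, hG, -⟩ := exists_extension_norm_eq _ (f.mkContinuous C hfC)
  refine ⟨(InnerProductSpace.toDual ℝ E).symm G, fun w => ?_⟩
  rw [InnerProductSpace.toDual_symm_apply]
  exact (hG ⟨ι w, LinearMap.mem_range_self ι w⟩).trans (hf w)

/-- Testing the bound on `x • w` for all `x` makes the quadratic `2‖ι w‖² x² - ℓ w x + B`
nonnegative, so its discriminant is nonpositive. -/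
theorem sq_le_of_sub_two_mul_norm_sq_le (ι : W →ₗ[ℝ] E) (ℓ : W →ₗ[ℝ] ℝ) (B : ℝ)
    (hB : ∀ w, ℓ w - 2 * ‖ι w‖ ^ 2 ≤ B) (w : W) : ℓ w ^ 2 ≤ 8 * B * ‖ι w‖ ^ 2 := by
  have hquad : ∀ x : ℝ, 0 ≤ 2 * ‖ι w‖ ^ 2 * (x * x) + -ℓ w * x + B := fun x => by
    have := hB (x • w)
    rw [map_smul, map_smul, norm_smul, mul_pow, norm_eq_abs, sq_abs, smul_eq_mul] at this
    linarith
  have := discrim_le_zero hquad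
  rw [discrim] at this
  linarith

theorem exists_inner_eq_of_sub_two_mul_norm_sq_le [CompleteSpace E] (ι : W →ₗ[ℝ] E)
    (ℓ : W →ₗ[ℝ] ℝ) (B : ℝ) (hB : ∀ w, ℓ w - 2 * ‖ι w‖ ^ 2 ≤ B) :
    ∃ φ : E, ∀ w, inner ℝ φ (ι w) = ℓ w := by
  refine exists_inner_eq_of_abs_le ι ℓ √(8 * B) fun w => ?_
  calc |ℓ w| ≤ √(8 * B * ‖ι w‖ ^ 2) :=
        abs_le_sqrt (sq_le_of_sub_two_mul_norm_sq_le ι ℓ B hB w)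
    _ = √(8 * B) * ‖ι w‖ := by rw [sqrt_mul' _ (sq_nonneg _), sqrt_sq (norm_nonneg _)]

end Representation

namespace IsC01Test

variable {H H₁ H₂ : ℝ → ℝ → ℝ}

theorem zero : IsC01Test fun _ _ => 0 := by
  refine ⟨continuous_const, HasCompactSupport.zero, fun _ => differentiable_const 0, ?_⟩
  simp only [deriv_const']
  exact continuous_const

theorem add (h₁ : IsC01Test H₁) (h₂ : IsC01Test H₂) : IsC01Test (H₁ + H₂) := by
  refine ⟨h₁.1.add h₂.1, h₁.2.1.add h₂.2.1, fun s => (h₁.2.2.1 s).add (h₂.2.2.1 s), ?_⟩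
  have hderiv : (uncurry fun s u => deriv ((H₁ + H₂) s) u)
      = fun p => deriv (H₁ p.1) p.2 + deriv (H₂ p.1) p.2 :=
    funext fun p => deriv_add (h₁.2.2.1 p.1 p.2) (h₂.2.2.1 p.1 p.2)
  rw [hderiv]
  exact h₁.2.2.2.add h₂.2.2.2

theorem const_smul (h : IsC01Test H) (c : ℝ) : IsC01Test (c • H) := by
  refine ⟨continuous_const.mul h.1, h.2.1.smul_left (f := fun _ => c),
    fun s => (h.2.2.1 s).const_mul c, ?_⟩
  have hderiv : (uncurry fun s u => deriv ((c • H) s) u) = fun p => c * deriv (H p.1) p.2 :=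
    funext fun p => deriv_const_mul c (h.2.2.1 p.1 p.2)
  rw [hderiv]
  exact continuous_const.mul h.2.2.2

/-- The space derivative vanishes wherever `H` vanishes near the point. -/
theorem hasCompactSupport_deriv (h : IsC01Test H) :
    HasCompactSupport fun p : ℝ × ℝ => deriv (H p.1) p.2 := by
  refine h.2.1.mono' fun p hp => ?_
  by_contra hnot
  have hslice : H p.1 =ᶠ[nhds p.2] fun _ => 0 :=
    ((Continuous.prodMk_right p.1).tendsto p.2).eventually
      (notMem_tsupport_iff_eventuallyEq.mp hnot)
  exact hp (hslice.deriv_eq.trans (deriv_const p.2 0))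

variable {μ : Measure (ℝ × ℝ)} [IsFiniteMeasureOnCompacts μ]

theorem memLp (h : IsC01Test H) (p : ENNReal) : MemLp (uncurry H) p μ :=
  h.1.memLp_of_hasCompactSupport h.2.1

theorem integrable_deriv_mul (h : IsC01Test H) {ζ : ℝ × ℝ → ℝ}
    (hζ : AEStronglyMeasurable ζ μ) {C : ℝ} (hζC : ∀ᵐ p ∂μ, ‖ζ p‖ ≤ C) :
    Integrable (fun p => deriv (H p.1) p.2 * ζ p) μ :=
  (h.2.2.2.integrable_of_hasCompactSupport h.hasCompactSupport_deriv).mul_bdd hζ hζC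

end IsC01Test

def testFunctions : Submodule ℝ (ℝ → ℝ → ℝ) where
  carrier := {H | IsC01Test H}
  add_mem' := IsC01Test.add
  zero_mem' := IsC01Test.zero
  smul_mem' c _ hH := hH.const_smul c

namespace testFunctions

variable (μ : Measure (ℝ × ℝ))

@[simps]
noncomputable def toL2 [IsFiniteMeasureOnCompacts μ] : testFunctions →ₗ[ℝ] Lp ℝ 2 μ where
  toFun H := (H.2.memLp 2).toLp (uncurry H.1)
  map_add' H₁ H₂ := (H₁.2.memLp 2).toLp_add (H₂.2.memLp 2)
  map_smul' c H := (H.2.memLp 2).toLp_const_smul c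

theorem inner_toL2 [IsFiniteMeasureOnCompacts μ] (φ : Lp ℝ 2 μ) (H : testFunctions) :
    inner ℝ φ (toL2 μ H) = ∫ p, φ p * H.1 p.1 p.2 ∂μ := by
  rw [L2.inner_def]
  refine integral_congr_ae ?_
  filter_upwards [(H.2.memLp (μ := μ) 2).coeFn_toLp] with p hp
  simp [hp, uncurry, mul_comm]

theorem norm_toL2_sq [IsFiniteMeasureOnCompacts μ] (H : testFunctions) :
    ‖toL2 μ H‖ ^ 2 = ∫ p, H.1 p.1 p.2 ^ 2 ∂μ := by
  rw [← real_inner_self_eq_norm_sq, inner_toL2]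
  refine integral_congr_ae ?_
  filter_upwards [(H.2.memLp (μ := μ) 2).coeFn_toLp] with p hp
  simp [hp, uncurry, sq]

noncomputable def derivPairing (ζ : ℝ × ℝ → ℝ)
    (hζ : ∀ H : testFunctions, Integrable (fun p => deriv (H.1 p.1) p.2 * ζ p) μ) :
    testFunctions →ₗ[ℝ] ℝ where
  toFun H := ∫ p, deriv (H.1 p.1) p.2 * ζ p ∂μ
  map_add' H₁ H₂ := by
    have hderiv : ∀ p : ℝ × ℝ, deriv ((H₁ + H₂).1 p.1) p.2
        = deriv (H₁.1 p.1) p.2 + deriv (H₂.1 p.1) p.2 :=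
      fun p => deriv_add (H₁.2.2.2.1 p.1 p.2) (H₂.2.2.2.1 p.1 p.2)
    simp only [hderiv, add_mul]
    exact integral_add (hζ H₁) (hζ H₂)
  map_smul' c H := by
    have hderiv : ∀ p : ℝ × ℝ, deriv ((c • H).1 p.1) p.2 = c * deriv (H.1 p.1) p.2 :=
      fun p => deriv_const_mul c (H.2.2.2.1 p.1 p.2)
    simp only [hderiv, mul_assoc, RingHom.id_apply, smul_eq_mul]
    exact integral_const_mul c _

theorem exists_memLp_integral_mul_eq_derivPairing [IsFiniteMeasureOnCompacts μ]
    (ζ : ℝ × ℝ → ℝ)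
    (hζ : ∀ H : testFunctions, Integrable (fun p => deriv (H.1 p.1) p.2 * ζ p) μ) (B : ℝ)
    (hB : ∀ H : testFunctions, derivPairing μ ζ hζ H - 2 * ∫ p, H.1 p.1 p.2 ^ 2 ∂μ ≤ B) :
    ∃ ψ : ℝ × ℝ → ℝ, Measurable ψ ∧ MemLp ψ 2 μ ∧
      ∀ H : testFunctions, ∫ p, ψ p * H.1 p.1 p.2 ∂μ = derivPairing μ ζ hζ H := by
  obtain ⟨φ, hφ⟩ := exists_inner_eq_of_sub_two_mul_norm_sq_le (toL2 μ) (derivPairing μ ζ hζ) B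
    fun H => by simpa only [norm_toL2_sq] using hB H
  obtain ⟨ψ, hψ, hφψ⟩ := (Lp.aestronglyMeasurable φ).aemeasurable
  refine ⟨ψ, hψ, (Lp.memLp φ).ae_eq hφψ, fun H => ?_⟩
  rw [← hφ, inner_toL2]
  exact integral_congr_ae (hφψ.symm.mul (ae_of_all _ fun _ => rfl))

end testFunctions

noncomputable abbrev slabMeasure (T : ℝ) : Measure (ℝ × ℝ) :=
  (volume.restrict (Set.Ioc 0 T)).prod volume

theorem intervalIntegral_integral_eq_integral_slabMeasure {T : ℝ} (hT : 0 ≤ T)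
    (G : ℝ → ℝ → ℝ) (hG : Integrable (uncurry G) (slabMeasure T)) :
    ∫ s in (0 : ℝ)..T, ∫ u : ℝ, G s u = ∫ p, G p.1 p.2 ∂slabMeasure T := by
  rw [intervalIntegral.integral_of_le hT]
  exact (integral_prod _ hG).symm

theorem volume_restrict_Icc_prod_univ (T : ℝ) :
    volume.restrict (Set.Icc (0 : ℝ) T ×ˢ Set.univ) = slabMeasure T := by
  rw [Measure.volume_eq_prod, ← Measure.prod_restrict, Measure.restrict_univ,
    ← Measure.restrict_congr_set Ioc_ae_eq_Icc]

open testFunctions in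
theorem stmt_7_general
    (T : ℝ) (hT : 0 < T)
    (ζ : ℝ → ℝ → ℝ)
    (hmeas : Measurable (Function.uncurry ζ))
    (h01 : ∀ s u : ℝ, 0 ≤ ζ s u ∧ ζ s u ≤ 1)
    (B : ℝ)
    (hEnergy : ∀ H : ℝ → ℝ → ℝ, IsC01Test H →
      (∫ s in (0 : ℝ)..T, ∫ u : ℝ, deriv (H s) u * ζ s u)
        - 2 * ∫ s in (0 : ℝ)..T, ∫ u : ℝ, (H s u) ^ 2 ≤ B) :
    ∃ g : ℝ → ℝ → ℝ,
      Measurable (Function.uncurry g) ∧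
      IntegrableOn (fun p : ℝ × ℝ => (g p.1 p.2) ^ 2)
        (Set.Icc (0 : ℝ) T ×ˢ (Set.univ : Set ℝ)) ∧
      ∀ H : ℝ → ℝ → ℝ, IsC01Test H →
        ∫ s in (0 : ℝ)..T, ∫ u : ℝ, H s u * g s u
          = - ∫ s in (0 : ℝ)..T, ∫ u : ℝ, deriv (H s) u * ζ s u := by
  set μ := slabMeasure T
  have fubini := @intervalIntegral_integral_eq_integral_slabMeasure T hT.le
  have hζ (H : testFunctions) : Integrable (fun p => deriv (H.1 p.1) p.2 * uncurry ζ p) μ :=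
    H.2.integrable_deriv_mul hmeas.aestronglyMeasurable <| ae_of_all _ fun ⟨s, u⟩ =>
      (abs_of_nonneg (h01 s u).1).trans_le (h01 s u).2
  obtain ⟨ψ, hψ, hψL2, hψH⟩ := exists_memLp_integral_mul_eq_derivPairing μ _ hζ B fun H => by
    have hH := hEnergy H.1 H.2
    rwa [fubini (fun s u => deriv (H.1 s) u * ζ s u) (hζ H),
      fubini (fun s u => H.1 s u ^ 2) (H.2.memLp 2).integrable_sq] at hH
  refine ⟨fun s u => -ψ (s, u), hψ.neg, ?_, fun H hH => ?_⟩
  · rw [IntegrableOn, volume_restrict_Icc_prod_univ]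
    simpa using hψL2.integrable_sq
  · have hψH_int : Integrable (fun p => -(ψ p * H p.1 p.2)) μ :=
      (hψL2.integrable_mul (hH.memLp 2)).neg
    calc ∫ s in (0 : ℝ)..T, ∫ u : ℝ, H s u * -ψ (s, u)
        = ∫ s in (0 : ℝ)..T, ∫ u : ℝ, -(ψ (s, u) * H s u) := by simp only [mul_neg, mul_comm]
      _ = -derivPairing μ _ hζ ⟨H, hH⟩ := by
        rw [fubini (fun s u => -(ψ (s, u) * H s u)) hψH_int, integral_neg, ← hψH]
      _ = -∫ s in (0 : ℝ)..T, ∫ u : ℝ, deriv (H s) u * ζ s u := by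
        rw [fubini (fun s u => deriv (H s) u * ζ s u) (hζ ⟨H, hH⟩)]
        rfl

/-- If `ζ : [0,T] × ℝ → [0,1]` is measurable and there is `B > 0` with
`∫₀ᵀ∫_ℝ ∂_u H ζ − 2 ∫₀ᵀ∫_ℝ H² ≤ B` for every `C^{0,1}_0` test function `H`, then `ζ`
admits a weak space derivative `g` which is square integrable on `[0,T] × ℝ`:
`∫₀ᵀ∫_ℝ H g = − ∫₀ᵀ∫_ℝ ∂_u H ζ` for every such `H`. -/
theorem stmt_7
    (T : ℝ) (hT : 0 < T)
    (ζ : ℝ → ℝ → ℝ)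
    (hmeas : Measurable (Function.uncurry ζ))
    (h01 : ∀ s u : ℝ, 0 ≤ ζ s u ∧ ζ s u ≤ 1)
    (B : ℝ) (hB : 0 < B)
    (hEnergy : ∀ H : ℝ → ℝ → ℝ, IsC01Test H →
      (∫ s in (0 : ℝ)..T, ∫ u : ℝ, deriv (H s) u * ζ s u)
        - 2 * ∫ s in (0 : ℝ)..T, ∫ u : ℝ, (H s u) ^ 2 ≤ B) :
    ∃ g : ℝ → ℝ → ℝ,
      Measurable (Function.uncurry g) ∧
      IntegrableOn (fun p : ℝ × ℝ => (g p.1 p.2) ^ 2)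
        (Set.Icc (0 : ℝ) T ×ˢ (Set.univ : Set ℝ)) ∧
      ∀ H : ℝ → ℝ → ℝ, IsC01Test H →
        ∫ s in (0 : ℝ)..T, ∫ u : ℝ, H s u * g s u
          = - ∫ s in (0 : ℝ)..T, ∫ u : ℝ, deriv (H s) u * ζ s u :=
  stmt_7_general T hT ζ hmeas h01 B hEnergy
end

section
/- Let α ∈ (0,1) and let ν_α be the Bernoulli product measure with parameter α on Ω = {0,1}^ℤ. For z ∈ ℤ let τ_z : Ω → Ω be the map (τ_z ξ)(x) = ξ(x−1) if x > z, (τ_z ξ)(z) = 0, and (τ_z ξ)(x) = ξ(x) if x < z. Let (c_z)_{z ∈ ℤ} be nonnegative reals with Σ_{z∈ℤ} c_z < ∞, and let f : Ω → ℝ be a bounded measurable function. Then Σ_{z ∈ ℤ} c_z ∫_Ω [f(τ_z ξ) − f(ξ)] f(ξ) dν_α(ξ) ≤ (Σ_{z ∈ ℤ} c_z / (2(1−α))) · ∫_Ω f(ξ)² dν_α(ξ). -/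
open MeasureTheory ProbabilityTheory

/-!
Deleting coordinate `z` of an i.i.d. sequence (`ξ ↦ ξ ∘ succAbove z`) preserves its law, and
inserting `a` at `z` undoes the deletion up to overwriting the `z`-th coordinate:
`insertAt z a (ξ ∘ succAbove z) = update ξ z a`. As `ξ z` is independent of `update ξ z a`,
this gives `ν{ξ z = a} · ∫ g (τ_z ξ) dν = ∫_{ξ z = a} g dν ≤ ∫ g dν` for `g ≥ 0`.
With `g = f²` and `(u - v) v ≤ u² / 2`, every term of the series is at most
`c_z ∫ f² dν / (2(1 - α))`.
-/

namespace BernoulliShift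

section IID

variable {ι X : Type*} [MeasurableSpace X] {ν : Measure (ι → X)}

theorem map_comp_eq_self_of_iIndepFun (hind : iIndepFun (fun i (ξ : ι → X) => ξ i) ν)
    (hident : ∀ i j, ν.map (fun ξ => ξ i) = ν.map (fun ξ => ξ j))
    {e : ι → ι} (he : e.Injective) :
    ν.map (fun ξ => ξ ∘ e) = ν := by
  calc ν.map (fun ξ => ξ ∘ e)
      = Measure.infinitePi fun i => ν.map (fun ξ => ξ (e i)) :=
        (hind.precomp he).map_fun_eq_infinitePi_map fun i => measurable_pi_apply (e i)
    _ = Measure.infinitePi fun i => ν.map (fun ξ => ξ i) := by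
        congr 1; funext i; exact hident (e i) i
    _ = ν.map (fun ξ i => ξ i) :=
        (hind.map_fun_eq_infinitePi_map fun i => measurable_pi_apply i).symm
    _ = ν := Measure.map_id'

theorem indepFun_eval_update [DecidableEq ι] (hind : iIndepFun (fun i (ξ : ι → X) => ξ i) ν)
    (z : ι) (a : X) :
    IndepFun (fun ξ => ξ z) (fun ξ => Function.update ξ z a) ν := by
  set m : ι → MeasurableSpace (ι → X) := fun i => .comap (fun ξ => ξ i) ‹_›
  have hsplit : Indep (⨆ i ∈ ({z} : Set ι), m i) (⨆ i ∈ ({z} : Set ι)ᶜ, m i) ν :=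
    indep_iSup_of_disjoint (fun i => (measurable_pi_apply i).comap_le) hind.iIndep
      disjoint_compl_right
  have hupdate :
      Measurable[⨆ i ∈ ({z} : Set ι)ᶜ, m i] (fun ξ => Function.update ξ z a) := by
    refine @measurable_pi_lambda _ _ _ (⨆ i ∈ ({z} : Set ι)ᶜ, m i) _ _ fun x => ?_
    rcases eq_or_ne x z with rfl | hx
    · simp only [Function.update_self]
      exact measurable_const
    · simp only [Function.update_of_ne hx]
      exact (comap_measurable _).mono
        (le_iSup₂ (f := fun i (_ : i ∈ ({z} : Set ι)ᶜ) => m i) x hx) le_rfl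
  rw [IndepFun_iff_Indep]
  exact indep_of_indep_of_le_right (indep_of_indep_of_le_left hsplit
    (le_iSup₂ (f := fun i (_ : i ∈ ({z} : Set ι)) => m i) z rfl)) hupdate.comap_le

theorem setIntegral_eval_eq_mul_integral_update [DecidableEq ι] [MeasurableSingletonClass X]
    (hind : iIndepFun (fun i (ξ : ι → X) => ξ i) ν) (z : ι) (a : X)
    {g : (ι → X) → ℝ} (hg : Measurable g) :
    ∫ ξ in {ξ | ξ z = a}, g ξ ∂ν
      = ν.real {ξ | ξ z = a} * ∫ ξ, g (Function.update ξ z a) ∂ν := by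
  have hS : MeasurableSet {ξ : ι → X | ξ z = a} :=
    (measurableSet_singleton a).preimage (measurable_pi_apply z)
  have hfactor : {ξ : ι → X | ξ z = a}.indicator g
      = (({a} : Set X).indicator 1 ∘ fun ξ => ξ z)
        * (g ∘ fun ξ => Function.update ξ z a) := by
    funext ξ
    by_cases h : ξ z = a
    · subst h
      simp
    · simp [h]
  rw [← integral_indicator hS, hfactor,
    (indepFun_eval_update hind z a).integral_comp_mul_comp (measurable_pi_apply z).aemeasurable
      (by fun_prop) ((measurable_one.indicator (measurableSet_singleton a)).aestronglyMeasurable)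
      hg.aestronglyMeasurable]
  congr 1
  exact integral_indicator_one hS

theorem map_eval_eq_of_measure_true {ν : Measure (ι → Bool)} [IsProbabilityMeasure ν]
    {p : ENNReal} (h : ∀ i, ν {ξ | ξ i = true} = p) (i j : ι) :
    ν.map (fun ξ => ξ i) = ν.map (fun ξ => ξ j) := by
  have htrue (k : ι) : ν.map (fun ξ => ξ k) {true} = p := by
    rw [Measure.map_apply (measurable_pi_apply k) (measurableSet_singleton true)]
    exact h k
  have (k : ι) : IsProbabilityMeasure (ν.map (fun ξ => ξ k)) :=
    Measure.isProbabilityMeasure_map (measurable_pi_apply k).aemeasurable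
  refine Measure.ext_iff_singleton.mpr fun b => ?_
  cases b
  · rw [show ({false} : Set Bool) = {true}ᶜ by ext; simp,
      prob_compl_eq_one_sub (measurableSet_singleton _),
      prob_compl_eq_one_sub (measurableSet_singleton _), htrue, htrue]
  · rw [htrue, htrue]

end IID

section Insertion

variable {X : Type*}

def succAbove (z j : ℤ) : ℤ := if j < z then j else j + 1

theorem succAbove_injective (z : ℤ) : (succAbove z).Injective := by
  intro i j h
  simp only [succAbove] at h
  split_ifs at h <;> omega

def insertAt (z : ℤ) (a : X) (ξ : ℤ → X) : ℤ → X :=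
  fun x => if z < x then ξ (x - 1) else if x = z then a else ξ x

theorem insertAt_comp_succAbove (z : ℤ) (a : X) (ξ : ℤ → X) :
    insertAt z a (ξ ∘ succAbove z) = Function.update ξ z a := by
  funext x
  rcases lt_trichotomy x z with h | rfl | h
  · simp [insertAt, succAbove, h, h.not_gt, h.ne]
  · simp [insertAt]
  · simp [insertAt, succAbove, h, h.ne', show ¬ x - 1 < z by omega]

variable [MeasurableSpace X]

theorem measurable_insertAt (z : ℤ) (a : X) : Measurable (insertAt (X := X) z a) := by
  refine measurable_pi_lambda _ fun x => ?_
  unfold insertAt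
  split_ifs
  · exact measurable_pi_apply _
  · exact measurable_const
  · exact measurable_pi_apply _

variable [MeasurableSingletonClass X] {ν : Measure (ℤ → X)}

theorem measureReal_mul_integral_comp_insertAt
    (hind : iIndepFun (fun i (ξ : ℤ → X) => ξ i) ν)
    (hident : ∀ i j, ν.map (fun ξ => ξ i) = ν.map (fun ξ => ξ j)) (z : ℤ) (a : X)
    {g : (ℤ → X) → ℝ} (hg : Measurable g) :
    ν.real {ξ | ξ z = a} * ∫ ξ, g (insertAt z a ξ) ∂ν
      = ∫ ξ in {ξ | ξ z = a}, g ξ ∂ν := by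
  have hdelete : Measurable fun ξ : ℤ → X => ξ ∘ succAbove z :=
    measurable_pi_lambda _ fun j => measurable_pi_apply _
  rw [setIntegral_eval_eq_mul_integral_update hind z a hg]
  congr 1
  conv_lhs => rw [← map_comp_eq_self_of_iIndepFun hind hident (succAbove_injective z)]
  rw [integral_map hdelete.aemeasurable (f := fun ξ => g (insertAt z a ξ))
    (hg.comp (measurable_insertAt z a)).aestronglyMeasurable]
  simp only [insertAt_comp_succAbove]

theorem integral_comp_insertAt_sub_mul_le [IsFiniteMeasure ν]
    (hind : iIndepFun (fun i (ξ : ℤ → X) => ξ i) ν)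
    (hident : ∀ i j, ν.map (fun ξ => ξ i) = ν.map (fun ξ => ξ j)) (z : ℤ) (a : X)
    (hp : 0 < ν.real {ξ | ξ z = a}) {f : (ℤ → X) → ℝ} (hf : Measurable f) {M : ℝ}
    (hM : ∀ ξ, |f ξ| ≤ M) :
    ∫ ξ, (f (insertAt z a ξ) - f ξ) * f ξ ∂ν
      ≤ 1 / (2 * ν.real {ξ | ξ z = a}) * ∫ ξ, f ξ ^ 2 ∂ν := by
  set p := ν.real {ξ | ξ z = a}
  have hf2 : MemLp f 2 ν := .of_bound hf.aestronglyMeasurable M (ae_of_all _ hM)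
  have hfi2 : MemLp (fun ξ => f (insertAt z a ξ)) 2 ν :=
    .of_bound (hf.comp (measurable_insertAt z a)).aestronglyMeasurable M
      (ae_of_all _ fun _ => hM _)
  have hsq : p * ∫ ξ, f (insertAt z a ξ) ^ 2 ∂ν ≤ ∫ ξ, f ξ ^ 2 ∂ν := by
    rw [measureReal_mul_integral_comp_insertAt hind hident z a (hf.pow_const 2)]
    exact setIntegral_le_integral hf2.integrable_sq (ae_of_all _ fun _ => sq_nonneg _)
  calc ∫ ξ, (f (insertAt z a ξ) - f ξ) * f ξ ∂ν
      ≤ ∫ ξ, f (insertAt z a ξ) ^ 2 / 2 ∂ν :=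
        integral_mono ((hfi2.sub hf2).integrable_mul hf2) (hfi2.integrable_sq.div_const 2)
          fun ξ => by nlinarith [sq_nonneg (f (insertAt z a ξ) - 2 * f ξ)]
    _ = (∫ ξ, f (insertAt z a ξ) ^ 2 ∂ν) / 2 := integral_div 2 _
    _ ≤ 1 / (2 * p) * ∫ ξ, f ξ ^ 2 ∂ν := by
        rw [div_mul_eq_mul_div, one_mul, le_div_iff₀ (by positivity)]
        linarith

end Insertion

theorem tsum_mul_le_tsum_mul_of_le {ι : Type*} {c u : ι → ℝ} (hc : ∀ i, 0 ≤ c i)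
    (hcs : Summable c) {K : ℝ} (hK : 0 ≤ K) (hu : ∀ i, u i ≤ K) :
    ∑' i, c i * u i ≤ (∑' i, c i) * K := by
  by_cases hcu : Summable fun i => c i * u i
  · rw [← tsum_mul_right]
    exact hcu.tsum_le_tsum (fun i => mul_le_mul_of_nonneg_left (hu i) (hc i)) (hcs.mul_right K)
  · rw [tsum_eq_zero_of_not_summable hcu]
    exact mul_nonneg (tsum_nonneg hc) hK

end BernoulliShift

open BernoulliShift in
/-- Estimate for the shift part of the generator under the Bernoulli
product measure.  With `ν` the Bernoulli product measure on `{0,1}^ℤ` with parameter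
`α ∈ (0,1)`, `τ_z` the right shift inserting a `0` at `z`, `(c_z)` nonnegative summable
and `f` bounded measurable,
`∑_z c_z ∫ (f(τ_z ξ) − f(ξ)) f(ξ) dν ≤ (∑_z c_z) / (2(1−α)) · ∫ f(ξ)² dν`. -/
theorem stmt_9
    (α : ℝ) (hα : α ∈ Set.Ioo (0 : ℝ) 1)
    (ν : Measure (ℤ → Bool)) [IsProbabilityMeasure ν]
    (hBern : ∀ x : ℤ, ν {ξ | ξ x = true} = ENNReal.ofReal α)
    (hIndep : iIndepFun
      (fun (x : ℤ) (ξ : ℤ → Bool) => ξ x) ν)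
    (τ : ℤ → (ℤ → Bool) → (ℤ → Bool))
    (hτ : ∀ z : ℤ, ∀ ξ : ℤ → Bool, ∀ x : ℤ,
      τ z ξ x = if z < x then ξ (x - 1) else if x = z then false else ξ x)
    (c : ℤ → ℝ) (hc : ∀ z, 0 ≤ c z) (hcsum : Summable c)
    (f : (ℤ → Bool) → ℝ)
    (hfmeas : Measurable f)
    (hfbdd : ∃ M : ℝ, ∀ ξ, |f ξ| ≤ M) :
    ∑' z : ℤ, c z * ∫ ξ, (f (τ z ξ) - f ξ) * f ξ ∂ν
      ≤ (∑' z : ℤ, c z) / (2 * (1 - α)) * ∫ ξ, (f ξ) ^ 2 ∂ν := by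
  obtain ⟨M, hM⟩ := hfbdd
  obtain rfl : τ = fun z => insertAt z false := by
    funext z ξ x
    exact hτ z ξ x
  have hfalse (z : ℤ) : ν.real {ξ | ξ z = false} = 1 - α := by
    have hcompl : {ξ : ℤ → Bool | ξ z = false} = {ξ | ξ z = true}ᶜ := by ext; simp
    have htrue : MeasurableSet {ξ : ℤ → Bool | ξ z = true} :=
      (measurableSet_singleton true).preimage (measurable_pi_apply z)
    rw [hcompl, probReal_compl_eq_one_sub htrue, measureReal_def, hBern,
      ENNReal.toReal_ofReal hα.1.le]
  have h1α : 0 < 1 - α := sub_pos.mpr hα.2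
  have hident := map_eval_eq_of_measure_true hBern
  rw [div_mul_eq_mul_div, mul_div_assoc, ← one_div_mul_eq_div (2 * (1 - α))]
  refine tsum_mul_le_tsum_mul_of_le hc hcsum (by positivity) fun z => ?_
  simpa only [hfalse z] using integral_comp_insertAt_sub_mul_le hIndep hident z false
    (by rw [hfalse z]; exact h1α) hfmeas hM
end
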